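/- Let (V1, V2) be a compact normal pair on a complex Hilbert space H, and let f be a unit vector in E_1 = ker(C(V1, V2) − I) that is an eigenvector of the cross-commutator [V2*, V1]. Let H_f be the closure of the linear span of {V1^m V2^n f : m, n ≥ 0}. Then every closed subspace S ⊆ H_f that is invariant under V1, V2, V1*, and V2* satisfies S = {0} or S = H_f (i.e. the restriction of (V1, V2) to H_f is irreducible). -/

import Mathlib

open ContinuousLinearMap

section Defs

variable {H : Type*} [NormedAddCommGroup H] [InnerProductSpace ℂ H] [CompleteSpace H]

/-- The defect operator `C(V₁, V₂) = I - V₁V₁* - V₂V₂* + V₁V₂V₁*V₂*` of a pair of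
operators on a complex Hilbert space. -/
noncomputable def defectOp (V₁ V₂ : H →L[ℂ] H) : H →L[ℂ] H :=
  1 - V₁ ∘L adjoint V₁ - V₂ ∘L adjoint V₂ + V₁ ∘L V₂ ∘L adjoint V₁ ∘L adjoint V₂

/-- The cross-commutator `[V₂*, V₁] = V₂*V₁ - V₁V₂*`. -/
noncomputable def crossComm (V₁ V₂ : H →L[ℂ] H) : H →L[ℂ] H :=
  adjoint V₂ ∘L V₁ - V₁ ∘L adjoint V₂

/-- An isometric pair: both operators are isometries and they commute. -/
def IsIsometricPair (V₁ V₂ : H →L[ℂ] H) : Prop :=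
  (∀ x : H, ‖V₁ x‖ = ‖x‖) ∧ (∀ x : H, ‖V₂ x‖ = ‖x‖) ∧ V₁ ∘L V₂ = V₂ ∘L V₁

/-- A shift: an isometry `V` such that `(V*)^n x → 0` for every `x`. -/
def IsShift (V : H →L[ℂ] H) : Prop :=
  (∀ x : H, ‖V x‖ = ‖x‖) ∧
    ∀ x : H, Filter.Tendsto (fun n : ℕ => (adjoint V ^ n) x) Filter.atTop (nhds 0)

/-- A BCL pair: an isometric pair whose product is a shift. -/
def IsBCLPair (V₁ V₂ : H →L[ℂ] H) : Prop :=
  IsIsometricPair V₁ V₂ ∧ IsShift (V₁ ∘L V₂)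

/-- A compact normal pair: a BCL pair whose cross-commutator is compact and normal. -/
def IsCompactNormalPair (V₁ V₂ : H →L[ℂ] H) : Prop :=
  IsBCLPair V₁ V₂ ∧ IsCompactOperator ⇑(crossComm V₁ V₂) ∧
    crossComm V₁ V₂ ∘L adjoint (crossComm V₁ V₂) =
      adjoint (crossComm V₁ V₂) ∘L crossComm V₁ V₂

/-- A subspace reduces the pair `(V₁, V₂)` if it is invariant under `V₁, V₂, V₁*, V₂*`. -/
def ReducesPair (V₁ V₂ : H →L[ℂ] H) (S : Submodule ℂ H) : Prop :=
  (∀ x ∈ S, V₁ x ∈ S) ∧ (∀ x ∈ S, V₂ x ∈ S) ∧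
    (∀ x ∈ S, adjoint V₁ x ∈ S) ∧ (∀ x ∈ S, adjoint V₂ x ∈ S)

/-- A pair is irreducible if its only closed reducing subspaces are `⊥` and `⊤`. -/
def IsIrreduciblePair (V₁ V₂ : H →L[ℂ] H) : Prop :=
  ∀ S : Submodule ℂ H, IsClosed (S : Set H) → ReducesPair V₁ V₂ S → S = ⊥ ∨ S = ⊤

/-- An `n`-finite pair: a compact normal pair whose defect operator has `n`-dimensional
range. -/
def IsNFinitePair (n : ℕ) (V₁ V₂ : H →L[ℂ] H) : Prop :=
  IsCompactNormalPair V₁ V₂ ∧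
    Module.rank ℂ (LinearMap.range (defectOp V₁ V₂ : H →ₗ[ℂ] H)) = n

end Defs

section Aux2

variable {H : Type*} [NormedAddCommGroup H] [InnerProductSpace ℂ H] [CompleteSpace H]

local notation "⟪" x ", " y "⟫" => @inner ℂ _ _ x y

omit [CompleteSpace H] in
lemma aux_inner_map {V : H →L[ℂ] H} (hV : ∀ x, ‖V x‖ = ‖x‖) (x y : H) :
    ⟪V x, V y⟫ = ⟪x, y⟫ :=
  LinearIsometry.inner_map_map ⟨V.toLinearMap, hV⟩ x y

lemma aux_adj_self {V : H →L[ℂ] H} (hV : ∀ x, ‖V x‖ = ‖x‖) (x : H) :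
    adjoint V (V x) = x := by
  apply ext_inner_right ℂ
  intro y
  rw [adjoint_inner_left, aux_inner_map hV]

lemma aux_adj_norm_le {V : H →L[ℂ] H} (hV : ∀ x, ‖V x‖ = ‖x‖) (x : H) :
    ‖adjoint V x‖ ≤ ‖x‖ := by
  have h1 : ‖V‖ ≤ 1 := opNorm_le_bound V zero_le_one (fun y => by rw [hV y, one_mul])
  calc ‖adjoint V x‖ ≤ ‖adjoint V‖ * ‖x‖ := le_opNorm _ x
    _ = ‖V‖ * ‖x‖ := by rw [LinearIsometryEquiv.norm_map adjoint V]
    _ ≤ 1 * ‖x‖ := mul_le_mul_of_nonneg_right h1 (norm_nonneg x)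
    _ = ‖x‖ := one_mul _

lemma aux_adj_comm {V₁ V₂ : H →L[ℂ] H} (hc : V₁ ∘L V₂ = V₂ ∘L V₁) (x : H) :
    adjoint V₁ (adjoint V₂ x) = adjoint V₂ (adjoint V₁ x) := by
  have h := congrArg adjoint hc
  rw [adjoint_comp, adjoint_comp] at h
  have := DFunLike.congr_fun h x
  simpa [comp_apply] using this.symm

lemma aux_wandering {V₁ V₂ : H →L[ℂ] H}
    (h1 : ∀ x, ‖V₁ x‖ = ‖x‖) (h2 : ∀ x, ‖V₂ x‖ = ‖x‖) (hc : V₁ ∘L V₂ = V₂ ∘L V₁)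
    {g : H} (hg : defectOp V₁ V₂ g = g) :
    adjoint V₁ g = 0 ∧ adjoint V₂ g = 0 := by
  set A₁ := adjoint V₁ with hA₁
  set A₂ := adjoint V₂ with hA₂
  have h : g - V₁ (A₁ g) - V₂ (A₂ g) + V₁ (V₂ (A₁ (A₂ g))) = g := by
    have := hg
    simp only [defectOp, add_apply, sub_apply, one_apply, comp_apply] at this
    exact this
  have hkey : V₁ (V₂ (A₁ (A₂ g))) = V₁ (A₁ g) + V₂ (A₂ g) := by
    have h2' : g + V₁ (V₂ (A₁ (A₂ g))) = g + (V₁ (A₁ g) + V₂ (A₂ g)) := by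
      calc g + V₁ (V₂ (A₁ (A₂ g)))
          = (g - V₁ (A₁ g) - V₂ (A₂ g) + V₁ (V₂ (A₁ (A₂ g)))) + (V₁ (A₁ g) + V₂ (A₂ g)) := by
            abel
        _ = g + (V₁ (A₁ g) + V₂ (A₂ g)) := by rw [h]
    exact add_left_cancel h2'
  have e1 : ⟪g, V₁ (A₁ g)⟫ = (‖A₁ g‖ : ℂ)^2 := by
    rw [← adjoint_inner_left, ← hA₁, inner_self_eq_norm_sq_to_K]; norm_cast
  have e2 : ⟪g, V₂ (A₂ g)⟫ = (‖A₂ g‖ : ℂ)^2 := by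
    rw [← adjoint_inner_left, ← hA₂, inner_self_eq_norm_sq_to_K]; norm_cast
  have e3 : ⟪g, V₁ (V₂ (A₁ (A₂ g)))⟫ = (‖A₁ (A₂ g)‖ : ℂ)^2 := by
    rw [← adjoint_inner_left, ← hA₁, ← adjoint_inner_left, ← hA₂,
      show A₂ (A₁ g) = A₁ (A₂ g) from (aux_adj_comm hc g).symm, inner_self_eq_norm_sq_to_K]
    norm_cast
  have ecomplex : (‖A₁ (A₂ g)‖ : ℂ)^2 = (‖A₁ g‖ : ℂ)^2 + (‖A₂ g‖ : ℂ)^2 := by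
    rw [← e1, ← e2, ← e3, ← inner_add_right, hkey]
  have ereal : ‖A₁ (A₂ g)‖^2 = ‖A₁ g‖^2 + ‖A₂ g‖^2 := by exact_mod_cast ecomplex
  have hle : ‖A₁ (A₂ g)‖ ≤ ‖A₂ g‖ := aux_adj_norm_le h1 _
  have ha0 : ‖A₁ g‖ = 0 := by
    have hsq : ‖A₁ g‖^2 ≤ 0 := by nlinarith [norm_nonneg (A₂ g), norm_nonneg (A₁ (A₂ g))]
    nlinarith [norm_nonneg (A₁ g)]
  have hA1g : A₁ g = 0 := norm_eq_zero.mp ha0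
  refine ⟨hA1g, ?_⟩
  have hw : A₁ (A₂ g) = 0 := by rw [aux_adj_comm hc g, hA1g, map_zero]
  have hb2 : ‖A₂ g‖^2 = 0 := by rw [hw, norm_zero] at ereal; rw [ha0] at ereal; nlinarith
  have hb0 : ‖A₂ g‖ = 0 := by nlinarith [norm_nonneg (A₂ g)]
  exact norm_eq_zero.mp hb0

end Aux2

section MainProof

local notation "⟪" x ", " y "⟫" => @inner ℂ _ _ x y

/-- For a compact normal pair, the restriction of the pair to the
closed subspace generated by a unit eigenvector `f ∈ E₁` of the cross-commutator is
irreducible. -/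
theorem stmt_17 {H : Type*} [NormedAddCommGroup H] [InnerProductSpace ℂ H] [CompleteSpace H]
    (V₁ V₂ : H →L[ℂ] H)
    (hcnp : IsCompactNormalPair V₁ V₂)
    (f : H) (hf : f ∈ LinearMap.ker ((defectOp V₁ V₂ - 1 : H →L[ℂ] H) : H →ₗ[ℂ] H)) (hfnorm : ‖f‖ = 1)
    (heig : ∃ μ : ℂ, crossComm V₁ V₂ f = μ • f) :
    ∀ S : Submodule ℂ H, IsClosed (S : Set H) →
      S ≤ (Submodule.span ℂ
        (Set.range fun p : ℕ × ℕ => (V₁ ^ p.1) ((V₂ ^ p.2) f))).topologicalClosure →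
      ReducesPair V₁ V₂ S →
      S = ⊥ ∨
        S = (Submodule.span ℂ
          (Set.range fun p : ℕ × ℕ => (V₁ ^ p.1) ((V₂ ^ p.2) f))).topologicalClosure := by
  obtain ⟨⟨⟨hi1, hi2, hcomm⟩, -⟩, -⟩ := hcnp
  intro S hScl hSle hSred
  set M : Submodule ℂ H :=
    Submodule.span ℂ (Set.range fun p : ℕ × ℕ => (V₁ ^ p.1) ((V₂ ^ p.2) f)) with hM
  -- f is fixed by the defect operator, hence "wandering"
  have hf' : defectOp V₁ V₂ f = f := by
    have h0 : (defectOp V₁ V₂ - 1) f = 0 := hf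
    have h1 : defectOp V₁ V₂ f - f = 0 := by
      simpa [ContinuousLinearMap.sub_apply, ContinuousLinearMap.one_apply] using h0
    exact sub_eq_zero.mp h1
  obtain ⟨hfw1, hfw2⟩ := aux_wandering hi1 hi2 hcomm hf'
  -- basic power manipulations
  have hpowgen : ∀ (T : H →L[ℂ] H) (m : ℕ) (y : H), (T ^ (m + 1)) y = T ((T ^ m) y) := by
    intro T m y
    rw [pow_succ']
    rfl
  have hgen : ∀ m n : ℕ, (V₁ ^ m) ((V₂ ^ n) f) ∈ M := fun m n =>
    Submodule.subset_span ⟨(m, n), rfl⟩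
  have hcm : ∀ (m : ℕ) (y : H), V₂ ((V₁ ^ m) y) = (V₁ ^ m) (V₂ y) := by
    intro m y
    have hc : Commute V₂ V₁ := by
      show V₂ * V₁ = V₁ * V₂
      exact hcomm.symm
    have hc2 : V₂ * V₁ ^ m = V₁ ^ m * V₂ := (hc.pow_right m)
    calc V₂ ((V₁ ^ m) y) = (V₂ * V₁ ^ m) y := rfl
      _ = (V₁ ^ m * V₂) y := by rw [hc2]
      _ = (V₁ ^ m) (V₂ y) := rfl
  -- M is invariant under V₁ and V₂
  have hMV₁ : ∀ x ∈ M, V₁ x ∈ M := by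
    intro x hx
    induction hx using Submodule.span_induction with
    | mem y hy =>
      obtain ⟨⟨m, n⟩, rfl⟩ := hy
      show V₁ ((V₁ ^ m) ((V₂ ^ n) f)) ∈ M
      rw [← hpowgen V₁ m]
      exact hgen (m + 1) n
    | zero => simpa using M.zero_mem
    | add a b _ _ ha hb => rw [map_add]; exact M.add_mem ha hb
    | smul t a _ ha => rw [map_smul]; exact M.smul_mem t ha
  have hMV₂ : ∀ x ∈ M, V₂ x ∈ M := by
    intro x hx
    induction hx using Submodule.span_induction with
    | mem y hy =>
      obtain ⟨⟨m, n⟩, rfl⟩ := hy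
      show V₂ ((V₁ ^ m) ((V₂ ^ n) f)) ∈ M
      rw [hcm m, ← hpowgen V₂ n]
      exact hgen m (n + 1)
    | zero => simpa using M.zero_mem
    | add a b _ _ ha hb => rw [map_add]; exact M.add_mem ha hb
    | smul t a _ ha => rw [map_smul]; exact M.smul_mem t ha
  -- S is invariant under powers
  have hSpow : ∀ (T : H →L[ℂ] H), (∀ x ∈ S, T x ∈ S) →
      ∀ (m : ℕ) (x : H), x ∈ S → (T ^ m) x ∈ S := by
    intro T hT m
    induction m with
    | zero => intro x hx; simpa using hx
    | succ k ih => intro x hx; rw [hpowgen T k]; exact hT _ (ih x hx)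
  -- Sᗮ is invariant under V₁, V₂ and their adjoints
  have hperpV₁ : ∀ x ∈ Sᗮ, V₁ x ∈ Sᗮ := by
    intro x hx
    rw [Submodule.mem_orthogonal] at hx ⊢
    intro u hu
    rw [← adjoint_inner_left]
    exact hx _ (hSred.2.2.1 u hu)
  have hperpV₂ : ∀ x ∈ Sᗮ, V₂ x ∈ Sᗮ := by
    intro x hx
    rw [Submodule.mem_orthogonal] at hx ⊢
    intro u hu
    rw [← adjoint_inner_left]
    exact hx _ (hSred.2.2.2 u hu)
  have hperpA₁ : ∀ x ∈ Sᗮ, adjoint V₁ x ∈ Sᗮ := by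
    intro x hx
    rw [Submodule.mem_orthogonal] at hx ⊢
    intro u hu
    rw [adjoint_inner_right]
    exact hx _ (hSred.1 u hu)
  have hperpA₂ : ∀ x ∈ Sᗮ, adjoint V₂ x ∈ Sᗮ := by
    intro x hx
    rw [Submodule.mem_orthogonal] at hx ⊢
    intro u hu
    rw [adjoint_inner_right]
    exact hx _ (hSred.2.1 u hu)
  -- the defect operator maps S into S and Sᗮ into Sᗮ
  have hCexp : ∀ x : H, defectOp V₁ V₂ x =
      x - V₁ (adjoint V₁ x) - V₂ (adjoint V₂ x) + V₁ (V₂ (adjoint V₁ (adjoint V₂ x))) := by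
    intro x
    simp only [defectOp, add_apply, sub_apply, ContinuousLinearMap.one_apply, comp_apply]
  have hCS : ∀ x ∈ S, defectOp V₁ V₂ x ∈ S := by
    intro x hx
    rw [hCexp]
    exact S.add_mem
      (S.sub_mem (S.sub_mem hx (hSred.1 _ (hSred.2.2.1 x hx)))
        (hSred.2.1 _ (hSred.2.2.2 x hx)))
      (hSred.1 _ (hSred.2.1 _ (hSred.2.2.1 _ (hSred.2.2.2 x hx))))
  have hCperp : ∀ x ∈ Sᗮ, defectOp V₁ V₂ x ∈ Sᗮ := by
    intro x hx
    rw [hCexp]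
    exact Sᗮ.add_mem
      (Sᗮ.sub_mem (Sᗮ.sub_mem hx (hperpV₁ _ (hperpA₁ x hx)))
        (hperpV₂ _ (hperpA₂ x hx)))
      (hperpV₁ _ (hperpV₂ _ (hperpA₁ _ (hperpA₂ x hx))))
  -- orthogonal decomposition of f
  haveI : CompleteSpace S := hScl.completeSpace_coe
  obtain ⟨g, hgS, h, hhS, hfgh⟩ := (Submodule.exists_add_mem_mem_orthogonal f : ∃ y ∈ S, ∃ z ∈ Sᗮ, f = y + z)
  -- g is also fixed by the defect operator
  have hCg : defectOp V₁ V₂ g = g := by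
    have hsum : defectOp V₁ V₂ g + defectOp V₁ V₂ h = g + h := by
      rw [← map_add, ← hfgh, hf', hfgh]
    have hd : defectOp V₁ V₂ g - g = h - defectOp V₁ V₂ h := by
      have h2' : (defectOp V₁ V₂ g - g) + (g + defectOp V₁ V₂ h) =
          (h - defectOp V₁ V₂ h) + (g + defectOp V₁ V₂ h) := by
        calc (defectOp V₁ V₂ g - g) + (g + defectOp V₁ V₂ h)
            = defectOp V₁ V₂ g + defectOp V₁ V₂ h := by abel
          _ = g + h := hsum
          _ = (h - defectOp V₁ V₂ h) + (g + defectOp V₁ V₂ h) := by abel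
      exact add_right_cancel h2'
    have hmem1 : defectOp V₁ V₂ g - g ∈ S := S.sub_mem (hCS g hgS) hgS
    have hmem2 : defectOp V₁ V₂ g - g ∈ Sᗮ := by
      rw [hd]; exact Sᗮ.sub_mem hhS (hCperp h hhS)
    have h0 : defectOp V₁ V₂ g - g = 0 :=
      inner_self_eq_zero.mp ((Submodule.mem_orthogonal S _).mp hmem2 _ hmem1)
    exact sub_eq_zero.mp h0
  obtain ⟨hgw1, hgw2⟩ := aux_wandering hi1 hi2 hcomm hCg
  have hgN : g ∈ M.topologicalClosure := hSle hgS
  have hfM : f ∈ M := by simpa using hgen 0 0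
  have hfN : f ∈ M.topologicalClosure := Submodule.le_topologicalClosure M hfM
  -- the "vanishes on closure" principle
  have hclosure0 : ∀ x : H, x ∈ M.topologicalClosure → (∀ y ∈ M, ⟪y, x⟫ = 0) → x = 0 := by
    intro x hxN hxo
    have hcl : closure (M : Set H) ⊆ {y : H | ⟪y, x⟫ = 0} := by
      apply closure_minimal
      · intro y hy
        exact hxo y hy
      · exact isClosed_eq (continuous_id.inner continuous_const) continuous_const
    have hx' : x ∈ closure (M : Set H) := hxN
    exact inner_self_eq_zero.mp (hcl hx')
  -- g is a multiple of f
  set c : ℂ := ⟪f, g⟫ with hcdef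
  set h' : H := g - c • f with hh'
  have hA1h' : adjoint V₁ h' = 0 := by
    rw [hh', map_sub, map_smul, hgw1, hfw1, smul_zero, sub_zero]
  have hA2h' : adjoint V₂ h' = 0 := by
    rw [hh', map_sub, map_smul, hgw2, hfw2, smul_zero, sub_zero]
  have hfh' : ⟪f, h'⟫ = 0 := by
    rw [hh', inner_sub_right, inner_smul_right, inner_self_eq_norm_sq_to_K, hfnorm, ← hcdef]
    norm_num
  have horth : ∀ y ∈ M, ⟪y, h'⟫ = 0 := by
    intro y hy
    induction hy using Submodule.span_induction with
    | mem y hy =>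
      obtain ⟨⟨m, n⟩, rfl⟩ := hy
      match m, n with
      | 0, 0 => simpa using hfh'
      | (m + 1), n =>
        show ⟪(V₁ ^ (m + 1)) ((V₂ ^ n) f), h'⟫ = 0
        rw [hpowgen V₁ m, ← adjoint_inner_right, hA1h', inner_zero_right]
      | 0, (n + 1) =>
        show ⟪(V₁ ^ 0) ((V₂ ^ (n + 1)) f), h'⟫ = 0
        rw [pow_zero, ContinuousLinearMap.one_apply, hpowgen V₂ n, ← adjoint_inner_right,
          hA2h', inner_zero_right]
    | zero => simp
    | add a b _ _ ha hb => rw [inner_add_left, ha, hb, add_zero]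
    | smul t a _ ha => rw [inner_smul_left, ha, mul_zero]
  have hh'N : h' ∈ M.topologicalClosure := by
    rw [hh']
    exact Submodule.sub_mem _ hgN (Submodule.smul_mem _ c hfN)
  have hh'0 : h' = 0 := hclosure0 h' hh'N horth
  have hgcf : g = c • f := by
    rw [hh'] at hh'0
    exact sub_eq_zero.mp hh'0
  -- adjoint powers
  have hadjpow : ∀ (T : H →L[ℂ] H) (m : ℕ), adjoint (T ^ m) = adjoint T ^ m := by
    intro T m
    rw [← star_eq_adjoint, ← star_eq_adjoint, star_pow]
  by_cases hc0 : c = 0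
  · -- g = 0, so f ⊥ S and S = ⊥
    left
    have hg0 : g = 0 := by rw [hgcf, hc0, zero_smul]
    have hfS : f ∈ Sᗮ := by rw [hfgh, hg0, zero_add]; exact hhS
    rw [Submodule.eq_bot_iff]
    intro x hx
    apply hclosure0 x (hSle hx)
    intro y hy
    induction hy using Submodule.span_induction with
    | mem y hy =>
      obtain ⟨⟨m, n⟩, rfl⟩ := hy
      show ⟪(V₁ ^ m) ((V₂ ^ n) f), x⟫ = 0
      rw [← adjoint_inner_right, hadjpow V₁ m, ← adjoint_inner_right, hadjpow V₂ n]
      have hmem : (adjoint V₂ ^ n) ((adjoint V₁ ^ m) x) ∈ S :=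
        hSpow (adjoint V₂) hSred.2.2.2 n _ (hSpow (adjoint V₁) hSred.2.2.1 m x hx)
      exact inner_eq_zero_symm.mp ((Submodule.mem_orthogonal S f).mp hfS _ hmem)
    | zero => simp
    | add a b _ _ ha hb => rw [inner_add_left, ha, hb, add_zero]
    | smul t a _ ha => rw [inner_smul_left, ha, mul_zero]
  · -- f ∈ S and S = M.topologicalClosure
    right
    have hfS : f ∈ S := by
      have heq : f = c⁻¹ • g := by
        rw [hgcf, smul_smul, inv_mul_cancel₀ hc0, one_smul]
      rw [heq]
      exact S.smul_mem _ hgS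
    refine le_antisymm hSle ?_
    apply Submodule.topologicalClosure_minimal
    · apply Submodule.span_le.mpr
      rintro y ⟨⟨m, n⟩, rfl⟩
      exact hSpow V₁ hSred.1 m _ (hSpow V₂ hSred.2.1 n f hfS)
    · exact hScl

end MainProof
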